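/- arXiv:2105.02524 — 2 statements merged into one kernel-verified Lean document; each statement's English description precedes it below -/
import Mathlib

section
/- For all real ν > 1/2 and all x > 0, K_{ν−1}(x)/K_ν(x) < x/(ν − 1 + √((ν−1)² + x²)). -/
open Real

/-- Modified Bessel function of the first kind `I_ν(x)` (for `x > 0`),
defined by its standard power series. -/
noncomputable def besselI (ν x : ℝ) : ℝ :=
  ∑' k : ℕ, (x / 2) ^ (2 * k) / ((Nat.factorial k : ℝ) * Real.Gamma (k + ν + 1)) * (x / 2) ^ ν

/-- Modified Bessel function of the second kind `K_ν(x)` (for `x > 0`),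
defined by its standard integral representation. -/
noncomputable def besselK (ν x : ℝ) : ℝ :=
  ∫ t in Set.Ioi (0 : ℝ), Real.exp (-x * Real.cosh t) * Real.cosh (ν * t)

/-!
Integrating by parts in the integral representation gives the recurrence
`K_{ν+1} - K_{ν-1} = (2ν/x) K_ν`, and the Cauchy–Schwarz inequality, together with the identity
`cosh((ν-1)t) cosh((ν+1)t) = cosh²(νt) + sinh² t`, gives the strict Turán inequality
`K_ν² < K_{ν-1} K_{ν+1}`. For `μ = ν - 1` and `r = K_μ / K_{μ+1}`, eliminating `K_{μ-1}` between
the two yields `x r² + 2μ r < x`, so `r` lies below the positive root `x / (μ + √(μ² + x²))` of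
this quadratic.
-/

open MeasureTheory Set Filter Topology

section CauchySchwarz

variable {α : Type*} [MeasurableSpace α] {μ : Measure α} {f g : α → ℝ}

lemma integral_sqrt_mul_le (hf₀ : 0 ≤ᵐ[μ] f) (hg₀ : 0 ≤ᵐ[μ] g) (hf : Integrable f μ)
    (hg : Integrable g μ) : ∫ a, √(f a * g a) ∂μ ≤ √(∫ a, f a ∂μ) * √(∫ a, g a ∂μ) := by
  have memLp_sqrt : ∀ {h : α → ℝ}, 0 ≤ᵐ[μ] h → Integrable h μ →
      MemLp (fun a => √(h a)) (ENNReal.ofReal 2) μ := by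
    intro h h₀ hi
    rw [ENNReal.ofReal_ofNat,
      memLp_two_iff_integrable_sq (continuous_sqrt.comp_aestronglyMeasurable hi.1)]
    refine hi.congr ?_
    filter_upwards [h₀] with a ha using (sq_sqrt ha).symm
  have integral_sqrt_rpow_two : ∀ {h : α → ℝ}, 0 ≤ᵐ[μ] h →
      ∫ a, √(h a) ^ (2 : ℝ) ∂μ = ∫ a, h a ∂μ := by
    intro h h₀
    refine integral_congr_ae ?_
    filter_upwards [h₀] with a ha
    rw [rpow_two, sq_sqrt ha]
  have holder := integral_mul_le_Lp_mul_Lq_of_nonneg Real.HolderConjugate.two_two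
    (ae_of_all _ fun a => sqrt_nonneg (f a)) (ae_of_all _ fun a => sqrt_nonneg (g a))
    (memLp_sqrt hf₀ hf) (memLp_sqrt hg₀ hg)
  rw [integral_sqrt_rpow_two hf₀, integral_sqrt_rpow_two hg₀, ← sqrt_eq_rpow, ← sqrt_eq_rpow]
    at holder
  refine le_of_eq_of_le (integral_congr_ae ?_) holder
  filter_upwards [hf₀] with a ha using sqrt_mul ha _

lemma MeasureTheory.Integrable.sqrt_mul (hf₀ : 0 ≤ᵐ[μ] f) (hg₀ : 0 ≤ᵐ[μ] g)
    (hf : Integrable f μ) (hg : Integrable g μ) : Integrable (fun a => √(f a * g a)) μ := by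
  refine ((hf.add hg).div_const 2).mono'
    (continuous_sqrt.comp_aestronglyMeasurable (hf.1.mul hg.1)) ?_
  filter_upwards [hf₀, hg₀] with a (ha : 0 ≤ f a) (hb : 0 ≤ g a)
  rw [norm_of_nonneg (sqrt_nonneg _), Pi.add_apply, sqrt_le_iff]
  exact ⟨by linarith, by nlinarith [sq_nonneg (f a - g a)]⟩

end CauchySchwarz

lemma setIntegral_Ioi_pos {f : ℝ → ℝ} {a : ℝ} (hf : IntegrableOn f (Ioi a))
    (hpos : ∀ t > a, 0 < f t) : 0 < ∫ t in Ioi a, f t := by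
  have hsupp : Ioi a ⊆ Function.support f := fun t ht => (hpos t ht).ne'
  rw [setIntegral_pos_iff_support_of_nonneg_ae
    ((ae_restrict_iff' measurableSet_Ioi).2 (ae_of_all _ fun t ht => (hpos t ht).le)) hf,
    inter_eq_right.2 hsupp]
  simp

lemma setIntegral_Ioi_lt_setIntegral_Ioi {f g : ℝ → ℝ} {a : ℝ} (hf : IntegrableOn f (Ioi a))
    (hg : IntegrableOn g (Ioi a)) (hlt : ∀ t > a, f t < g t) :
    ∫ t in Ioi a, f t < ∫ t in Ioi a, g t := by
  rw [← sub_pos, ← integral_sub hg hf]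
  exact setIntegral_Ioi_pos (hg.sub hf) fun t ht => sub_pos.2 (hlt t ht)

lemma cosh_le_exp_abs (u : ℝ) : cosh u ≤ exp |u| := by
  rw [← cosh_abs, cosh_eq]
  linarith [exp_le_exp.2 (neg_le_self (abs_nonneg u))]

lemma abs_sinh_le_cosh (u : ℝ) : |sinh u| ≤ cosh u := by
  rw [abs_sinh, ← cosh_abs]
  exact (sinh_lt_cosh _).le

lemma abs_cosh_mul_le_exp (ν t : ℝ) : |cosh (ν * t)| ≤ exp (|ν| * |t|) := by
  rw [abs_of_pos (cosh_pos _), ← abs_mul]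
  exact cosh_le_exp_abs _

lemma abs_sinh_mul_le_exp (ν t : ℝ) : |sinh (ν * t)| ≤ exp (|ν| * |t|) := by
  rw [← abs_mul]
  exact (abs_sinh_le_cosh _).trans (cosh_le_exp_abs _)

lemma abs_sinh_mul_sinh_mul_le_exp (ν t : ℝ) :
    |sinh t * sinh (ν * t)| ≤ exp ((1 + |ν|) * |t|) := by
  have hsinh := abs_sinh_mul_le_exp 1 t
  rw [one_mul, abs_one, one_mul] at hsinh
  rw [abs_mul, add_mul, one_mul, exp_add]
  exact mul_le_mul hsinh (abs_sinh_mul_le_exp ν t) (abs_nonneg _) (exp_pos _).le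

lemma sq_div_four_le_cosh (u : ℝ) : u ^ 2 / 4 ≤ cosh u := by
  rw [← cosh_abs, cosh_eq, ← sq_abs]
  nlinarith [quadratic_le_exp_of_nonneg (abs_nonneg u), exp_pos (-|u|), abs_nonneg u]

lemma cosh_sub_mul_cosh_add (a b : ℝ) :
    cosh (a - b) * cosh (a + b) = cosh a ^ 2 + sinh b ^ 2 := by
  rw [cosh_sub, cosh_add]
  nlinarith [cosh_sq_sub_sinh_sq a, cosh_sq_sub_sinh_sq b]

section Decay

variable {x r : ℝ} {g : ℝ → ℝ}

lemma exp_neg_mul_cosh_mul_exp_le (hx : 0 < x) (r t : ℝ) :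
    exp (-x * cosh t) * exp (r * |t|) ≤ exp ((r + 1) ^ 2 / x) * exp (-|t|) := by
  rw [← exp_add, ← exp_add, exp_le_exp]
  have hcosh : x * (|t| ^ 2 / 4) ≤ x * cosh t := by
    gcongr
    rw [sq_abs]
    exact sq_div_four_le_cosh t
  have hsq : 0 ≤ (x * |t| / 2 - (r + 1)) ^ 2 / x := by positivity
  have hexpand : (x * |t| / 2 - (r + 1)) ^ 2 / x
      = x * (|t| ^ 2 / 4) - (r + 1) * |t| + (r + 1) ^ 2 / x := by
    field_simp
    ring
  linarith

lemma integrableOn_exp_neg_mul_cosh_mul (hx : 0 < x)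
    (hg : AEStronglyMeasurable g (volume.restrict (Ioi 0)))
    (hbound : ∀ t, |g t| ≤ exp (r * |t|)) :
    IntegrableOn (fun t => exp (-x * cosh t) * g t) (Ioi 0) := by
  refine ((exp_neg_integrableOn_Ioi 0 one_pos).const_mul (exp ((r + 1) ^ 2 / x))).mono'
    ((continuous_exp.comp (continuous_const.mul continuous_cosh)).aestronglyMeasurable.mul hg) ?_
  filter_upwards [ae_restrict_mem measurableSet_Ioi] with t ht
  have habs : -1 * t = -|t| := by rw [abs_of_pos (mem_Ioi.1 ht), neg_one_mul]
  rw [norm_mul, norm_of_nonneg (exp_pos _).le, habs]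
  exact (mul_le_mul_of_nonneg_left (hbound t) (exp_pos _).le).trans
    (exp_neg_mul_cosh_mul_exp_le hx r t)

lemma tendsto_exp_neg_mul_cosh_mul_atTop (hx : 0 < x) (hbound : ∀ t, |g t| ≤ exp (r * |t|)) :
    Tendsto (fun t => exp (-x * cosh t) * g t) atTop (𝓝 0) := by
  have hdecay : Tendsto (fun t => exp ((r + 1) ^ 2 / x) * exp (-|t|)) atTop (𝓝 0) := by
    simpa using (tendsto_exp_neg_atTop_nhds_zero.comp tendsto_abs_atTop_atTop).const_mul
      (exp ((r + 1) ^ 2 / x))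
  refine squeeze_zero_norm (fun t => ?_) hdecay
  rw [norm_mul, norm_of_nonneg (exp_pos _).le]
  exact (mul_le_mul_of_nonneg_left (hbound t) (exp_pos _).le).trans
    (exp_neg_mul_cosh_mul_exp_le hx r t)

end Decay

section BesselK

variable {x : ℝ}

lemma integrableOn_besselK_integrand (hx : 0 < x) (ν : ℝ) :
    IntegrableOn (fun t => exp (-x * cosh t) * cosh (ν * t)) (Ioi 0) :=
  integrableOn_exp_neg_mul_cosh_mul hx (by fun_prop) (abs_cosh_mul_le_exp ν)

lemma besselK_pos (hx : 0 < x) (ν : ℝ) : 0 < besselK ν x :=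
  setIntegral_Ioi_pos (integrableOn_besselK_integrand hx ν) fun _ _ =>
    mul_pos (exp_pos _) (cosh_pos _)

lemma integral_exp_neg_mul_cosh_mul_sinh_mul_sinh (hx : 0 < x) (ν : ℝ) :
    ∫ t in Ioi 0, exp (-x * cosh t) * (sinh t * sinh (ν * t)) = ν / x * besselK ν x := by
  have hsinh : IntegrableOn (fun t => exp (-x * cosh t) * (sinh t * sinh (ν * t))) (Ioi 0) :=
    integrableOn_exp_neg_mul_cosh_mul hx (by fun_prop) (abs_sinh_mul_sinh_mul_le_exp ν)
  have hcosh := (integrableOn_besselK_integrand hx ν).const_mul (ν / x)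
  have hderiv : ∀ t ∈ Ioi (0 : ℝ),
      HasDerivAt (fun t => -1 / x * (exp (-x * cosh t) * sinh (ν * t)))
        (exp (-x * cosh t) * (sinh t * sinh (ν * t))
          - ν / x * (exp (-x * cosh t) * cosh (ν * t))) t := by
    intro t _
    refine ((((hasDerivAt_cosh t).const_mul (-x)).exp.mul
      ((hasDerivAt_id' t).const_mul ν).sinh).const_mul (-1 / x)).congr_deriv ?_
    field_simp
    ring
  have hlim := (tendsto_exp_neg_mul_cosh_mul_atTop hx (abs_sinh_mul_le_exp ν)).const_mul (-1 / x)
  rw [mul_zero] at hlim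
  have hparts := integral_Ioi_of_hasDerivAt_of_tendsto (by fun_prop) hderiv (hsinh.sub hcosh) hlim
  rw [integral_sub hsinh hcosh, integral_const_mul] at hparts
  simp only [mul_zero, sinh_zero, sub_zero] at hparts
  rw [besselK]
  linarith

lemma besselK_add_one_sub_besselK_sub_one (hx : 0 < x) (ν : ℝ) :
    besselK (ν + 1) x - besselK (ν - 1) x = 2 * ν / x * besselK ν x := by
  have hcosh_diff : ∀ t, exp (-x * cosh t) * cosh ((ν + 1) * t)
      - exp (-x * cosh t) * cosh ((ν - 1) * t)
        = 2 * (exp (-x * cosh t) * (sinh t * sinh (ν * t))) := by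
    intro t
    rw [add_mul, sub_mul, one_mul, cosh_add, cosh_sub]
    ring
  rw [besselK, besselK, ← integral_sub (integrableOn_besselK_integrand hx _)
    (integrableOn_besselK_integrand hx _)]
  simp only [hcosh_diff, integral_const_mul, integral_exp_neg_mul_cosh_mul_sinh_mul_sinh hx]
  ring

lemma sq_besselK_lt_mul (hx : 0 < x) (ν : ℝ) :
    besselK ν x ^ 2 < besselK (ν - 1) x * besselK (ν + 1) x := by
  set w : ℝ → ℝ := fun t => exp (-x * cosh t)
  have hsub := integrableOn_besselK_integrand hx (ν - 1)
  have hadd := integrableOn_besselK_integrand hx (ν + 1)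
  have hnonneg : ∀ μ : ℝ, 0 ≤ᵐ[volume.restrict (Ioi 0)] fun t => w t * cosh (μ * t) :=
    fun μ => ae_of_all _ fun t => (mul_pos (exp_pos _) (cosh_pos _)).le
  have hpointwise : ∀ t > (0 : ℝ),
      w t * cosh (ν * t) < √(w t * cosh ((ν - 1) * t) * (w t * cosh ((ν + 1) * t))) := by
    intro t ht
    rw [lt_sqrt (mul_pos (exp_pos _) (cosh_pos _)).le, sub_mul, add_mul, one_mul,
      mul_mul_mul_comm, cosh_sub_mul_cosh_add]
    have hw := exp_pos (-x * cosh t)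
    simp only [w]
    nlinarith [mul_pos hw hw, sq_pos_of_pos (sinh_pos_iff.2 ht)]
  have hlt : besselK ν x < √(besselK (ν - 1) x) * √(besselK (ν + 1) x) :=
    (setIntegral_Ioi_lt_setIntegral_Ioi (integrableOn_besselK_integrand hx ν)
      (Integrable.sqrt_mul (hnonneg _) (hnonneg _) hsub hadd) hpointwise).trans_le
      (integral_sqrt_mul_le (hnonneg _) (hnonneg _) hsub hadd)
  calc besselK ν x ^ 2 < (√(besselK (ν - 1) x) * √(besselK (ν + 1) x)) ^ 2 :=
        pow_lt_pow_left₀ hlt (besselK_pos hx ν).le two_ne_zero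
    _ = besselK (ν - 1) x * besselK (ν + 1) x := by
        rw [mul_pow, sq_sqrt (besselK_pos hx _).le, sq_sqrt (besselK_pos hx _).le]

end BesselK

lemma div_lt_div_add_sqrt_of_mul_sq_add_lt {x μ a b : ℝ} (hx : 0 < x) (hb : 0 < b)
    (h : x * a ^ 2 + 2 * μ * a * b < x * b ^ 2) : a / b < x / (μ + √(μ ^ 2 + x ^ 2)) := by
  set s := √(μ ^ 2 + x ^ 2)
  have hs : s ^ 2 = μ ^ 2 + x ^ 2 := sq_sqrt (by positivity)
  have hμs : 0 < μ + s := by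
    linarith [neg_abs_le μ, abs_lt_of_sq_lt_sq (show μ ^ 2 < s ^ 2 by rw [hs]; nlinarith)
      (sqrt_nonneg _)]
  -- `(x a + μ b)² = x (x a² + 2 μ a b) + μ² b² < (s b)²`
  have hroot : x * a + μ * b < s * b := by
    refine abs_lt_of_sq_lt_sq' ?_ (by positivity) |>.2
    nlinarith
  rw [div_lt_div_iff₀ hb hμs]
  nlinarith

theorem besselK_ratio_upper_bound_general (ν x : ℝ) (hx : 0 < x) :
    besselK (ν - 1) x / besselK ν x < x / (ν - 1 + Real.sqrt ((ν - 1) ^ 2 + x ^ 2)) := by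
  have hrec := besselK_add_one_sub_besselK_sub_one hx (ν - 1)
  have hturan := sq_besselK_lt_mul hx (ν - 1)
  rw [sub_add_cancel] at hrec hturan
  refine div_lt_div_add_sqrt_of_mul_sq_add_lt hx (besselK_pos hx ν) ?_
  field_simp at hrec
  linear_combination x * hturan - besselK ν x * hrec

theorem besselK_ratio_upper_bound (ν x : ℝ) (hν : 1 / 2 < ν) (hx : 0 < x) :
    besselK (ν - 1) x / besselK ν x < x / (ν - 1 + Real.sqrt ((ν - 1) ^ 2 + x ^ 2)) :=
  besselK_ratio_upper_bound_general ν x hx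
end

section
/- For all real ν ≥ 1/2, the function x ↦ I_{ν−1}(x)/I_ν(x) is strictly decreasing on (0, ∞). -/
open Real

section BesselAux
open Finset Filter


noncomputable def bc (ν : ℝ) (k : ℕ) : ℝ := 1 / ((Nat.factorial k : ℝ) * Real.Gamma (k + ν + 1))

lemma bc_pos {ν : ℝ} (hν : -1 < ν) (k : ℕ) : 0 < bc ν k := by
  have h1 : (0:ℝ) < (k:ℝ) + ν + 1 := by
    have : (0:ℝ) ≤ (k:ℝ) := Nat.cast_nonneg k
    linarith
  have := Real.Gamma_pos_of_pos h1
  have h2 : (0:ℝ) < (Nat.factorial k : ℝ) := by positivity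
  unfold bc; positivity

lemma bc_rec {ν : ℝ} (hν : -1 < ν) (k : ℕ) :
    bc ν k = bc ν (k+1) * ((k+1) * (k+1+ν)) := by
  have h1 : (0:ℝ) < (k:ℝ) + ν + 1 := by
    have : (0:ℝ) ≤ (k:ℝ) := Nat.cast_nonneg k
    linarith
  have hG : Real.Gamma ((k:ℝ) + ν + 1 + 1) = ((k:ℝ) + ν + 1) * Real.Gamma ((k:ℝ) + ν + 1) :=
    Real.Gamma_add_one (ne_of_gt h1)
  have hGpos := Real.Gamma_pos_of_pos h1
  have hfac : (0:ℝ) < (Nat.factorial k : ℝ) := by positivity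
  unfold bc
  rw [Nat.factorial_succ]
  push_cast
  rw [show ((k:ℝ) + 1 + ν + 1) = ((k:ℝ) + ν + 1 + 1) by ring, hG]
  field_simp
  ring

lemma bc_shift {ν : ℝ} (hν : 0 < ν) (k : ℕ) :
    bc (ν - 1) k = ((k:ℝ) + ν) * bc ν k := by
  have h1 : (0:ℝ) < (k:ℝ) + ν := by
    have : (0:ℝ) ≤ (k:ℝ) := Nat.cast_nonneg k
    linarith
  have hG : Real.Gamma ((k:ℝ) + ν + 1) = ((k:ℝ) + ν) * Real.Gamma ((k:ℝ) + ν) :=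
    Real.Gamma_add_one (ne_of_gt h1)
  have hGpos := Real.Gamma_pos_of_pos h1
  have hfac : (0:ℝ) < (Nat.factorial k : ℝ) := by positivity
  unfold bc
  rw [show ((k:ℝ) + (ν - 1) + 1) = ((k:ℝ) + ν) by ring, hG]
  field_simp

lemma bc_summable_aux {ν : ℝ} (hν : -1 < ν) {R : ℝ} (hR : 0 ≤ R) :
    Summable (fun n => bc ν n * (n+1) * R ^ n) := by
  apply summable_of_ratio_norm_eventually_le (r := 1/2) (by norm_num)
  filter_upwards [eventually_ge_atTop (⌈4*R⌉₊ + 1)] with n hn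
  have hn1 : 1 ≤ n := le_trans (Nat.le_add_left 1 _) hn
  have hnR : 4*R ≤ (n:ℝ) := by
    calc 4*R ≤ (⌈4*R⌉₊ : ℝ) := Nat.le_ceil _
    _ ≤ (n:ℝ) := by exact_mod_cast le_trans (Nat.le_succ _) hn
  have hnr : (1:ℝ) ≤ (n:ℝ) := by exact_mod_cast hn1
  have hpos := bc_pos hν n
  have hpos' := bc_pos hν (n+1)
  have hν' : (n:ℝ) ≤ (n:ℝ) + 1 + ν := by linarith
  have hRn : (0:ℝ) ≤ R ^ n := pow_nonneg hR n
  rw [Real.norm_eq_abs, Real.norm_eq_abs, abs_of_nonneg (by positivity),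
    abs_of_nonneg (by positivity)]
  push_cast
  have h2 : bc ν (n+1) = bc ν n / (((n:ℝ)+1) * ((n:ℝ)+1+ν)) := by
    rw [bc_rec hν n, mul_div_cancel_right₀]
    push_cast
    nlinarith
  have h3 : R ≤ (n:ℝ)/4 := by linarith
  have hnum : ((n:ℝ)+1+1)*R ≤ 1/2*(((n:ℝ)+1) * (((n:ℝ)+1)*((n:ℝ)+1+ν))) := by
    nlinarith [mul_le_mul_of_nonneg_left h3 (show (0:ℝ) ≤ (n:ℝ)+2 by linarith),
      mul_le_mul_of_nonneg_left hν' (show (0:ℝ) ≤ ((n:ℝ)+1)*((n:ℝ)+1)/2 by positivity)]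
  have key : bc ν (n+1) * (((n:ℝ)+1)+1) * R ≤ 1/2 * (bc ν n * ((n:ℝ)+1)) := by
    rw [h2]
    rw [div_mul_eq_mul_div, div_mul_eq_mul_div, div_le_iff₀ (by nlinarith)]
    calc bc ν n * ((n:ℝ)+1+1) * R = bc ν n * (((n:ℝ)+1+1)*R) := by ring
      _ ≤ bc ν n * (1/2*(((n:ℝ)+1) * (((n:ℝ)+1)*((n:ℝ)+1+ν)))) :=
          mul_le_mul_of_nonneg_left hnum hpos.le
      _ = 1/2 * (bc ν n * ((n:ℝ)+1)) * (((n:ℝ)+1)*((n:ℝ)+1+ν)) := by ring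
  calc bc ν (n+1) * ((n:ℝ)+1+1) * R ^ (n+1) = (bc ν (n+1) * (((n:ℝ)+1)+1) * R) * R ^ n := by
        rw [pow_succ]; ring
    _ ≤ (1/2 * (bc ν n * ((n:ℝ)+1))) * R ^ n := mul_le_mul_of_nonneg_right key hRn
    _ = 1/2 * (bc ν n * ((n:ℝ)+1) * R ^ n) := by ring

lemma bc_summable {ν : ℝ} (hν : -1 < ν) (t : ℝ) :
    Summable (fun n => bc ν n * t ^ n) := by
  apply Summable.of_norm_bounded (bc_summable_aux hν (abs_nonneg t))
  intro n
  have hpos := bc_pos hν n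
  rw [Real.norm_eq_abs, abs_mul, abs_of_nonneg hpos.le, abs_pow]
  exact mul_le_mul_of_nonneg_right
    (le_mul_of_one_le_right hpos.le (by linarith [Nat.cast_nonneg (α := ℝ) n]))
    (pow_nonneg (abs_nonneg t) n)

lemma bc_summable_mul {ν : ℝ} (hν : -1 < ν) (t : ℝ) :
    Summable (fun n : ℕ => (n:ℝ) * bc ν n * t ^ n) := by
  apply Summable.of_norm_bounded (bc_summable_aux hν (abs_nonneg t))
  intro n
  have hpos := bc_pos hν n
  have h0 : (0:ℝ) ≤ (n:ℝ) * bc ν n := mul_nonneg (Nat.cast_nonneg n) hpos.le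
  rw [Real.norm_eq_abs, abs_mul, abs_pow, abs_of_nonneg h0]
  exact mul_le_mul_of_nonneg_right (by nlinarith [Nat.cast_nonneg (α := ℝ) n])
    (pow_nonneg (abs_nonneg t) n)

lemma coef_nonneg {ν : ℝ} (hν : 1/2 ≤ ν) (n : ℕ) :
    0 ≤ ∑ k ∈ Finset.range (n+1),
      bc ν k * bc (ν-1) (n-k) * (1 + 2*(k:ℝ) - 2*((n-k : ℕ):ℝ)) := by
  have hν0 : (0:ℝ) < ν := by linarith
  have hν1 : (-1:ℝ) < ν := by linarith
  set N : ℝ := (n:ℝ) with hN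
  have hN0 : (0:ℝ) ≤ N := Nat.cast_nonneg n
  -- rewrite the sum in terms of e_k = bc ν k * bc ν (n-k)
  have hrw : ∀ k ∈ Finset.range (n+1),
      bc ν k * bc (ν-1) (n-k) * (1 + 2*(k:ℝ) - 2*((n-k : ℕ):ℝ))
      = bc ν k * bc ν (n-k) * ((N - k + ν) * (4*(k:ℝ) - 2*N + 1)) := by
    intro k hk
    have hk' : k ≤ n := Finset.mem_range_succ_iff.mp hk
    have hc : ((n-k : ℕ):ℝ) = N - k := by
      rw [Nat.cast_sub hk']
    rw [bc_shift hν0, hc]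
    ring
  rw [Finset.sum_congr rfl hrw]
  -- the telescoping function
  set Hf : ℕ → ℝ := fun k =>
    (k:ℝ)*((k:ℝ)+ν)*((4*(k:ℝ)-4*N-2)*(2*(N+ν)) - (2*ν-1)*(4*N+4*ν-1)) with hHf
  set ψ : ℕ → ℝ := fun k => if k ≤ n then bc ν k * bc ν (n-k) * Hf k else 0 with hψ
  set rf : ℕ → ℝ := fun k =>
    (2*N+2*ν-1)*((N - k + ν) * (4*(k:ℝ) - 2*N + 1)) - (ν-1/2)*(N+2*ν) with hrf
  have tele : ∀ k ∈ Finset.range (n+1),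
      2*(N+ν) * rf k * (bc ν k * bc ν (n-k)) = ψ (k+1) - ψ k := by
    intro k hk
    have hk' : k ≤ n := Finset.mem_range_succ_iff.mp hk
    rcases lt_or_eq_of_le hk' with hlt | heq
    · -- k < n
      have h1 : ψ (k+1) = bc ν (k+1) * bc ν (n-(k+1)) * Hf (k+1) := by
        simp only [hψ, if_pos (by omega : k+1 ≤ n)]
      have h2 : ψ k = bc ν k * bc ν (n-k) * Hf k := by
        simp only [hψ, if_pos hk']
      have e2 : bc ν (n-(k+1)) = bc ν (n-k) * ((N - k) * (N - k + ν)) := by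
        have hs : (n-(k+1)) + 1 = n - k := by omega
        have := bc_rec hν1 (n-(k+1))
        rw [hs] at this
        rw [this]
        have hc1 : ((n-(k+1) : ℕ):ℝ) + 1 = N - k := by
          rw [show ((n-(k+1) : ℕ):ℝ) + 1 = (((n-(k+1)) + 1 : ℕ):ℝ) by push_cast; ring, hs,
            Nat.cast_sub hk']
        rw [hc1]
      have e1 : bc ν k = bc ν (k+1) * (((k:ℝ)+1) * ((k:ℝ)+1+ν)) := by
        have := bc_rec hν1 k
        push_cast at this
        exact this
      rw [h1, h2, e2, e1]
      simp only [hHf, hrf]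
      push_cast
      ring
    · -- k = n
      subst heq
      have h1 : ψ (k+1) = 0 := by
        simp only [hψ, if_neg (by omega : ¬ (k+1 ≤ k))]
      have h2 : ψ k = bc ν k * bc ν (k-k) * Hf k := by
        simp only [hψ, if_pos le_rfl]
      rw [h1, h2, Nat.sub_self]
      simp only [hHf, hrf, hN]
      ring
  have hsum0 : ∑ k ∈ Finset.range (n+1), 2*(N+ν) * rf k * (bc ν k * bc ν (n-k)) = 0 := by
    rw [Finset.sum_congr rfl tele, Finset.sum_range_sub ψ]
    have hψ0 : ψ 0 = 0 := by
      simp only [hψ, if_pos (Nat.zero_le n), hHf]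
      push_cast
      ring
    have hψn : ψ (n+1) = 0 := by
      simp only [hψ, if_neg (by omega : ¬ (n+1 ≤ n))]
    rw [hψ0, hψn, sub_zero]
  -- separate the two pieces
  have expand : ∀ k ∈ Finset.range (n+1),
      2*(N+ν) * rf k * (bc ν k * bc ν (n-k))
      = 2*(N+ν) * ((2*N+2*ν-1) * (bc ν k * bc ν (n-k) * ((N - k + ν) * (4*(k:ℝ) - 2*N + 1)))
        - (ν-1/2)*(N+2*ν) * (bc ν k * bc ν (n-k))) := by
    intro k _
    simp only [hrf]
    ring
  rw [Finset.sum_congr rfl expand] at hsum0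
  rw [← Finset.mul_sum, Finset.sum_sub_distrib, ← Finset.mul_sum, ← Finset.mul_sum] at hsum0
  set T : ℝ := ∑ k ∈ Finset.range (n+1),
      bc ν k * bc ν (n-k) * ((N - k + ν) * (4*(k:ℝ) - 2*N + 1)) with hT
  set S : ℝ := ∑ k ∈ Finset.range (n+1), bc ν k * bc ν (n-k) with hS
  have hSnn : 0 ≤ S := Finset.sum_nonneg fun k _ =>
    mul_nonneg (bc_pos hν1 k).le (bc_pos hν1 (n-k)).le
  have hNν : (0:ℝ) < 2*(N+ν) := by linarith
  have key : (2*N+2*ν-1) * T = (ν-1/2)*(N+2*ν) * S := by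
    have := mul_eq_zero.mp hsum0
    rcases this with h | h
    · linarith
    · linarith
  rcases Nat.eq_zero_or_pos n with hn0 | hn1
  · subst hn0
    have hNz : N = 0 := by rw [hN]; norm_num
    have hb := bc_pos hν1 0
    rw [hT, Finset.sum_range_one, hNz]
    norm_num
    nlinarith [mul_pos hb hb]
  · have hN1 : (1:ℝ) ≤ N := by rw [hN]; exact_mod_cast hn1
    have hpos : (0:ℝ) < 2*N+2*ν-1 := by linarith
    have hrhs : 0 ≤ (ν-1/2)*(N+2*ν) * S := by
      apply mul_nonneg (mul_nonneg (by linarith) (by linarith)) hSnn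
    nlinarith [key, hpos, hrhs]

noncomputable def Af (ν : ℝ) (t : ℝ) : ℝ := ∑' n, bc ν n * t ^ n

lemma Af_pos {ν : ℝ} (hν : -1 < ν) {t : ℝ} (ht : 0 ≤ t) : 0 < Af ν t := by
  apply Summable.tsum_pos (bc_summable hν t)
    (fun n => mul_nonneg (bc_pos hν n).le (pow_nonneg ht n)) 0
  simpa using bc_pos hν 0

lemma hasDerivAt_Af {ν : ℝ} (hν : -1 < ν) (t : ℝ) :
    HasDerivAt (Af ν) (∑' n, bc ν n * ((n:ℝ) * t ^ (n-1))) t := by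
  set R : ℝ := |t| + 1 with hR
  have hR1 : (1:ℝ) ≤ R := by
    have := abs_nonneg t; simp only [hR]; linarith
  have hR0 : (0:ℝ) ≤ R := by linarith
  have hmem : t ∈ Set.Ioo (-R) R := by
    constructor
    · have := neg_abs_le t; simp only [hR]; linarith
    · have := le_abs_self t; simp only [hR]; linarith
  show HasDerivAt (fun z => ∑' n, bc ν n * z ^ n) _ t
  refine hasDerivAt_tsum_of_isPreconnected (bc_summable_aux hν hR0)
    isOpen_Ioo (convex_Ioo _ _).isPreconnected
    (fun n y _ => (hasDerivAt_pow n y).const_mul (bc ν n))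
    (fun n y hy => ?_) hmem (bc_summable hν t) hmem
  have hyR : |y| ≤ R := by
    rcases Set.mem_Ioo.mp hy with ⟨h1, h2⟩
    rw [abs_le]; constructor <;> linarith
  have h1 : ‖bc ν n * ((n:ℝ) * y ^ (n-1))‖ = bc ν n * ((n:ℝ) * |y| ^ (n-1)) := by
    rw [Real.norm_eq_abs, abs_mul, abs_of_nonneg (bc_pos hν n).le, abs_mul, abs_pow,
      abs_of_nonneg (Nat.cast_nonneg n)]
  rw [h1]
  have h2 : |y| ^ (n-1) ≤ R ^ n := by
    calc |y| ^ (n-1) ≤ R ^ (n-1) := pow_le_pow_left₀ (abs_nonneg y) hyR _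
      _ ≤ R ^ n := pow_le_pow_right₀ hR1 (Nat.sub_le n 1)
  calc bc ν n * ((n:ℝ) * |y| ^ (n-1)) ≤ bc ν n * (((n:ℝ)+1) * R ^ n) := by
        apply mul_le_mul_of_nonneg_left _ (bc_pos hν n).le
        apply mul_le_mul (by linarith) h2 (pow_nonneg (abs_nonneg y) _) (by positivity)
    _ = bc ν n * ((n:ℝ)+1) * R ^ n := by ring

lemma tsum_shift {ν : ℝ} (t : ℝ) :
    (∑' n, bc ν n * ((n:ℝ) * t ^ (n-1))) * t = ∑' n : ℕ, (n:ℝ) * bc ν n * t ^ n := by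
  rw [← tsum_mul_right]
  apply tsum_congr
  intro n
  cases n with
  | zero => simp
  | succ m => simp only [Nat.add_sub_cancel, pow_succ]; push_cast; ring

lemma G_pos {ν : ℝ} (hν : 1/2 ≤ ν) {u : ℝ} (hu : 0 < u) :
    0 < Af ν u * Af (ν-1) u
      + 2 * ((∑' n : ℕ, (n:ℝ) * bc ν n * u ^ n) * Af (ν-1) u)
      - 2 * (Af ν u * (∑' n : ℕ, (n:ℝ) * bc (ν-1) n * u ^ n)) := by
  have hν1 : (-1:ℝ) < ν := by linarith
  have hν1' : (-1:ℝ) < ν - 1 := by linarith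
  set fa : ℕ → ℝ := fun n => bc ν n * u ^ n with hfa
  set fb : ℕ → ℝ := fun n => bc (ν-1) n * u ^ n with hfb
  set fa' : ℕ → ℝ := fun n => (n:ℝ) * bc ν n * u ^ n with hfa'
  set fb' : ℕ → ℝ := fun n => (n:ℝ) * bc (ν-1) n * u ^ n with hfb'
  have sa : Summable fun n => ‖fa n‖ := (bc_summable hν1 u).abs
  have sb : Summable fun n => ‖fb n‖ := (bc_summable hν1' u).abs
  have sa' : Summable fun n => ‖fa' n‖ := (bc_summable_mul hν1 u).abs
  have sb' : Summable fun n => ‖fb' n‖ := (bc_summable_mul hν1' u).abs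
  have P1 : Af ν u * Af (ν-1) u = ∑' n, ∑ kl ∈ Finset.HasAntidiagonal.antidiagonal n, fa kl.1 * fb kl.2 :=
    tsum_mul_tsum_eq_tsum_sum_antidiagonal_of_summable_norm sa sb
  have P2 : (∑' n, fa' n) * Af (ν-1) u
      = ∑' n, ∑ kl ∈ Finset.HasAntidiagonal.antidiagonal n, fa' kl.1 * fb kl.2 :=
    tsum_mul_tsum_eq_tsum_sum_antidiagonal_of_summable_norm sa' sb
  have P3 : Af ν u * (∑' n, fb' n)
      = ∑' n, ∑ kl ∈ Finset.HasAntidiagonal.antidiagonal n, fa kl.1 * fb' kl.2 :=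
    tsum_mul_tsum_eq_tsum_sum_antidiagonal_of_summable_norm sa sb'
  set W1 : ℕ → ℝ := fun n => ∑ kl ∈ Finset.HasAntidiagonal.antidiagonal n, fa kl.1 * fb kl.2 with hW1
  set W2 : ℕ → ℝ := fun n => ∑ kl ∈ Finset.HasAntidiagonal.antidiagonal n, fa' kl.1 * fb kl.2 with hW2
  set W3 : ℕ → ℝ := fun n => ∑ kl ∈ Finset.HasAntidiagonal.antidiagonal n, fa kl.1 * fb' kl.2 with hW3
  have sW1 : Summable W1 := (summable_norm_sum_mul_antidiagonal_of_summable_norm sa sb).of_norm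
  have sW2 : Summable W2 := (summable_norm_sum_mul_antidiagonal_of_summable_norm sa' sb).of_norm
  have sW3 : Summable W3 := (summable_norm_sum_mul_antidiagonal_of_summable_norm sa sb').of_norm
  have total_eq : ∑' n, (W1 n + (2 * W2 n - 2 * W3 n))
      = (∑' n, W1 n) + (2 * ∑' n, W2 n - 2 * ∑' n, W3 n) := by
    rw [Summable.tsum_add sW1 ((sW2.mul_left 2).sub (sW3.mul_left 2)),
      Summable.tsum_sub (sW2.mul_left 2) (sW3.mul_left 2), tsum_mul_left, tsum_mul_left]
  have hVform : ∀ n : ℕ, W1 n + (2 * W2 n - 2 * W3 n)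
      = (∑ k ∈ Finset.range (n+1),
          bc ν k * bc (ν-1) (n-k) * (1 + 2*(k:ℝ) - 2*((n-k : ℕ):ℝ))) * u ^ n := by
    intro n
    simp only [hW1, hW2, hW3, Finset.Nat.sum_antidiagonal_eq_sum_range_succ_mk]
    rw [Finset.sum_mul, Finset.mul_sum, Finset.mul_sum, ← Finset.sum_sub_distrib,
      ← Finset.sum_add_distrib]
    apply Finset.sum_congr rfl
    intro k hk
    have hk' : k ≤ n := Finset.mem_range_succ_iff.mp hk
    have hpow : u ^ k * u ^ (n-k) = u ^ n := by
      rw [← pow_add]; congr 1; omega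
    simp only [hfa, hfb, hfa', hfb']
    calc bc ν k * u ^ k * (bc (ν-1) (n-k) * u ^ (n-k))
          + (2 * ((k:ℝ) * bc ν k * u ^ k * (bc (ν-1) (n-k) * u ^ (n-k)))
            - 2 * (bc ν k * u ^ k * (((n-k:ℕ):ℝ) * bc (ν-1) (n-k) * u ^ (n-k))))
        = bc ν k * bc (ν-1) (n-k) * (1 + 2*(k:ℝ) - 2*((n-k : ℕ):ℝ)) * (u ^ k * u ^ (n-k)) := by
          ring
      _ = _ := by rw [hpow]
  have sV : Summable fun n => W1 n + (2 * W2 n - 2 * W3 n) :=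
    sW1.add ((sW2.mul_left 2).sub (sW3.mul_left 2))
  have hnn : ∀ n, 0 ≤ W1 n + (2 * W2 n - 2 * W3 n) := by
    intro n
    rw [hVform n]
    exact mul_nonneg (coef_nonneg hν n) (pow_nonneg hu.le n)
  have hp0 : 0 < W1 0 + (2 * W2 0 - 2 * W3 0) := by
    rw [hVform 0, show (0:ℕ)+1 = 1 from rfl, Finset.sum_range_one]
    have h1 := bc_pos hν1 0
    have h2 := bc_pos hν1' 0
    norm_num
    nlinarith [mul_pos h1 h2]
  have hpos := Summable.tsum_pos sV hnn 0 hp0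
  rw [total_eq] at hpos
  rw [P1, P2, P3]
  linarith

end BesselAux

open Finset Filter in
lemma besselI_eq (ν x : ℝ) : besselI ν x = Af ν ((x/2)^2) * (x/2) ^ ν := by
  unfold besselI Af bc
  rw [← tsum_mul_right]
  apply tsum_congr
  intro k
  rw [pow_mul]
  ring

theorem besselI_ratio_strictAntiOn (ν : ℝ) (hν : 1 / 2 ≤ ν) :
    StrictAntiOn (fun x : ℝ => besselI (ν - 1) x / besselI ν x) (Set.Ioi 0) := by
  have hν1 : (-1:ℝ) < ν := by linarith
  have hν1' : (-1:ℝ) < ν - 1 := by linarith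
  set F : ℝ → ℝ := fun x => Af (ν-1) ((x/2)^2) / (Af ν ((x/2)^2) * (x/2)) with hF
  have hDeriv : ∀ x : ℝ, 0 < x → ∃ d, HasDerivAt F d x ∧ d < 0 := by
    intro x hx
    have hu0 : 0 < (x/2)^2 := by positivity
    have h12 : HasDerivAt (fun y : ℝ => y/2) (1/2) x := (hasDerivAt_id x).div_const 2
    have hq : HasDerivAt (fun y : ℝ => (y/2)^2) (x/2) x := by
      have h := h12.fun_pow 2
      refine h.congr_deriv ?_
      rw [show 2 - 1 = 1 from rfl, pow_one]
      push_cast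
      ring
    set dA := ∑' n, bc ν n * ((n:ℝ) * ((x/2)^2) ^ (n-1)) with hdA
    set dB := ∑' n, bc (ν-1) n * ((n:ℝ) * ((x/2)^2) ^ (n-1)) with hdB
    have hA : HasDerivAt (Af ν) dA ((x/2)^2) := hasDerivAt_Af hν1 _
    have hB : HasDerivAt (Af (ν-1)) dB ((x/2)^2) := hasDerivAt_Af hν1' _
    have hAc := hA.comp x hq
    have hBc := hB.comp x hq
    rw [Function.comp_def] at hAc hBc
    have hD : HasDerivAt (fun y : ℝ => Af ν ((y/2)^2) * (y/2))
        (dA * (x/2) * (x/2) + Af ν ((x/2)^2) * (1/2)) x := hAc.mul h12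
    have hApos : 0 < Af ν ((x/2)^2) := Af_pos hν1 hu0.le
    have hBpos : 0 < Af (ν-1) ((x/2)^2) := Af_pos hν1' hu0.le
    have hden_pos : 0 < Af ν ((x/2)^2) * (x/2) := mul_pos hApos (by positivity)
    have hFd := hBc.div hD (ne_of_gt hden_pos)
    refine ⟨_, hFd, ?_⟩
    apply div_neg_of_neg_of_pos _ (by positivity)
    have hxx : (x/2)*(x/2) = (x/2)^2 := by ring
    have hG := G_pos hν hu0
    have e1 : dB * (x/2) * (Af ν ((x/2)^2) * (x/2))
        = (dB * ((x/2)^2)) * Af ν ((x/2)^2) := by rw [← hxx]; ring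
    have e2 : Af (ν-1) ((x/2)^2) * (dA * (x/2) * (x/2) + Af ν ((x/2)^2) * (1/2))
        = Af (ν-1) ((x/2)^2) * (dA * ((x/2)^2))
          + Af (ν-1) ((x/2)^2) * Af ν ((x/2)^2) / 2 := by rw [← hxx]; ring
    rw [e1, e2, hdA, hdB, tsum_shift, tsum_shift]
    linarith
  have hanti : StrictAntiOn F (Set.Ioi 0) := by
    apply strictAntiOn_of_deriv_neg (convex_Ioi 0)
    · intro x hx
      obtain ⟨d, hd, _⟩ := hDeriv x hx
      exact hd.continuousAt.continuousWithinAt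
    · intro x hx
      rw [interior_Ioi] at hx
      obtain ⟨d, hd, hneg⟩ := hDeriv x hx
      rw [hd.deriv]
      exact hneg
  have hex : ∀ z : ℝ, 0 < z → besselI (ν - 1) z / besselI ν z = F z := by
    intro z hz
    have hz2 : 0 < z/2 := by linarith
    rw [besselI_eq, besselI_eq, hF]
    have hrp : (z/2) ^ (ν - 1) = (z/2) ^ ν / (z/2) := by
      rw [Real.rpow_sub hz2, Real.rpow_one]
    rw [hrp]
    have hrpos : (0:ℝ) < (z/2) ^ ν := Real.rpow_pos_of_pos hz2 ν
    have key : Af (ν-1) ((z/2)^2) * ((z/2) ^ ν / (z/2)) / (Af ν ((z/2)^2) * (z/2) ^ ν)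
        = (Af (ν-1) ((z/2)^2) / (Af ν ((z/2)^2) * (z/2))) * ((z/2) ^ ν / (z/2) ^ ν) := by
      ring
    rw [key, div_self (ne_of_gt hrpos), mul_one]
  intro x hx y hy hxy
  simp only [Set.mem_Ioi] at hx hy
  show besselI (ν - 1) y / besselI ν y < besselI (ν - 1) x / besselI ν x
  rw [hex x hx, hex y hy]
  exact hanti (Set.mem_Ioi.mpr hx) (Set.mem_Ioi.mpr hy) hxy
end
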